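/- Let ψ ∈ L¹(ℝⁿ; ℂ), let φ : ℝⁿ → ℝ be continuously differentiable with compact support, and set φ_J(u) = 2^{−nJ} φ(2^{−J}u). For every x ∈ L²(ℝⁿ) and every c ∈ ℝⁿ, with (T_c x)(u) = x(u − c), the first-order scattering coefficients satisfy ‖ |(T_c x) ⋆ ψ| ⋆ φ_J − |x ⋆ ψ| ⋆ φ_J ‖_{L²} ≤ 2^{−J} ‖c‖ · ‖∇φ‖_{L¹} · ‖ψ‖_{L¹} · ‖x‖_{L²}, where |·| is the pointwise modulus. Hence the scattering coefficients ρ(x ⋆ ψ) ⋆ φ_J are locally invariant to translations at the scale 2^J. -/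

import Mathlib

/-!
Translation commutes with convolution, so `|(T_c x) ⋆ ψ| = T_c f` with `f = |x ⋆ ψ|`, and the
difference to bound is `f ⋆ (T_c φ_J - φ_J)`. Young's inequality `‖f ⋆ k‖₂ ≤ ‖f‖₂ ‖k‖₁` is used
twice: once for `‖f‖₂ ≤ ‖x‖₂ ‖ψ‖₁`, once with `k = T_c φ_J - φ_J`, whose `L¹` norm equals
`‖T_{2^{-J} c} φ - φ‖₁ ≤ 2^{-J} ‖c‖ ‖∇φ‖₁` after rescaling, by the fundamental theorem of calculus
along segments. The estimates are carried out for lower Lebesgue integrals, so no integrability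
needs checking: where a Bochner integral of the statement is undefined it is `0`, and the
pointwise bound `|∫ f - ∫ g| ≤ ∫⁻ |f - g|` still holds.
-/

open MeasureTheory ENNReal

theorem sq_lintegral_mul_le_lintegral_sq_mul_mul_lintegral {α : Type*} [MeasurableSpace α]
    {μ : Measure α} {f w : α → ℝ≥0∞} (hf : AEMeasurable f μ) (hw : AEMeasurable w μ) :
    (∫⁻ a, f a * w a ∂μ) ^ 2 ≤ (∫⁻ a, f a ^ 2 * w a ∂μ) * ∫⁻ a, w a ∂μ := by
  have sq_sqrt : ∀ b : ℝ≥0∞, (b ^ (2⁻¹ : ℝ)) ^ 2 = b := fun b => by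
    rw [← rpow_natCast, ← rpow_mul]; norm_num
  have holder := ENNReal.lintegral_mul_le_Lp_mul_Lq μ Real.HolderConjugate.two_two
    (hf.mul (hw.pow_const (2⁻¹ : ℝ))) (hw.pow_const (2⁻¹ : ℝ))
  simp only [Pi.mul_apply, mul_assoc, ← pow_two, sq_sqrt, mul_pow, rpow_two] at holder
  calc (∫⁻ a, f a * w a ∂μ) ^ 2
      ≤ ((∫⁻ a, f a ^ 2 * w a ∂μ) ^ (1 / 2 : ℝ) * (∫⁻ a, w a ∂μ) ^ (1 / 2 : ℝ)) ^ 2 :=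
        pow_le_pow_left₀ zero_le holder 2
    _ = (∫⁻ a, f a ^ 2 * w a ∂μ) * ∫⁻ a, w a ∂μ := by
        rw [mul_pow, one_div, sq_sqrt, sq_sqrt]

theorem eLpNorm_two_sq_eq_lintegral {α ε : Type*} [MeasurableSpace α] {μ : Measure α} [ENorm ε]
    (f : α → ε) :
    eLpNorm f 2 μ ^ 2 = ∫⁻ a, ‖f a‖ₑ ^ 2 ∂μ := by
  simpa using eLpNorm_nnreal_pow_eq_lintegral (f := f) (μ := μ) (p := 2) two_ne_zero

theorem enorm_integral_sub_integral_le {α E : Type*} [MeasurableSpace α] {μ : Measure α}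
    [NormedAddCommGroup E] [NormedSpace ℝ E] {f g : α → E}
    (hfg : AEStronglyMeasurable (fun a => f a - g a) μ) :
    ‖∫ a, f a ∂μ - ∫ a, g a ∂μ‖ₑ ≤ ∫⁻ a, ‖f a - g a‖ₑ ∂μ := by
  rcases eq_top_or_lt_top (∫⁻ a, ‖f a - g a‖ₑ ∂μ) with htop | hfin
  · exact htop ▸ le_top
  have hsub : Integrable (fun a => f a - g a) μ := ⟨hfg, hfin⟩
  by_cases hg : Integrable g μ
  · have hf : Integrable f μ := by simpa [Pi.add_def] using hsub.add hg
    rw [← integral_sub hf hg]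
    exact enorm_integral_le_lintegral_enorm _
  · have hf : ¬Integrable f μ := fun hf => hg (by simpa [Pi.sub_def] using hf.sub hsub)
    simp [integral_undef hf, integral_undef hg]

section Convolution

variable {G 𝕜 : Type*} [MeasurableSpace G] [AddCommGroup G] [MeasurableAdd₂ G] {μ : Measure G}
  [μ.IsAddLeftInvariant] [RCLike 𝕜]

theorem integral_comp_sub_mul_sub (f g : G → 𝕜) (c u : G) :
    ∫ v, f (v - c) * g (u - v) ∂μ = ∫ v, f v * g (u - c - v) ∂μ := by
  rw [← integral_add_right_eq_self _ c]
  simp only [add_sub_cancel_right, sub_add_eq_sub_sub, sub_right_comm u]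

variable [MeasurableNeg G] [SFinite μ]

theorem aestronglyMeasurable_integral_mul_sub {x ψ : G → 𝕜} (hx : AEStronglyMeasurable x μ)
    (hψ : AEStronglyMeasurable ψ μ) : AEStronglyMeasurable (fun v => ∫ w, x w * ψ (v - w) ∂μ) μ :=
  (hx.comp_snd.mul (hψ.comp_quasiMeasurePreserving
    (quasiMeasurePreserving_sub_of_right_invariant μ μ))).integral_prod_right'

theorem enorm_integral_comp_sub_mul_sub_integral_mul_sub_le {f k : G → 𝕜}
    (hf : AEStronglyMeasurable f μ) (hk : AEStronglyMeasurable k μ) (c u : G) :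
    ‖∫ v, f (v - c) * k (u - v) ∂μ - ∫ v, f v * k (u - v) ∂μ‖ₑ ≤
      ∫⁻ v, ‖f v‖ₑ * ‖k (u - v - c) - k (u - v)‖ₑ ∂μ := by
  have hk_sub : AEStronglyMeasurable (fun v => k (u - v)) μ :=
    hk.comp_quasiMeasurePreserving (quasiMeasurePreserving_sub_left_of_right_invariant μ u)
  have hk_sub_sub : AEStronglyMeasurable (fun v => k (u - v - c)) μ := by
    simpa [Function.comp_def, sub_add_eq_sub_sub] using
      hk_sub.comp_quasiMeasurePreserving (measurePreserving_add_right μ c).quasiMeasurePreserving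
  rw [integral_comp_sub_mul_sub]
  simp_rw [sub_right_comm u c, ← enorm_mul, mul_sub]
  exact enorm_integral_sub_integral_le ((hf.mul hk_sub_sub).sub (hf.mul hk_sub))

theorem eLpNorm_lintegral_mul_sub_le [μ.IsNegInvariant] {F K : G → ℝ≥0∞}
    (hF : AEMeasurable F μ) (hK : AEMeasurable K μ) :
    eLpNorm (fun u => ∫⁻ v, F v * K (u - v) ∂μ) 2 μ ≤ eLpNorm F 2 μ * ∫⁻ v, K v ∂μ := by
  have hK_sub : AEMeasurable (fun p : G × G => K (p.1 - p.2)) (μ.prod μ) :=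
    hK.comp_quasiMeasurePreserving (quasiMeasurePreserving_sub_of_right_invariant μ μ)
  have hFK : AEMeasurable (fun p : G × G => F p.2 ^ 2 * K (p.1 - p.2)) (μ.prod μ) :=
    (hF.comp_snd.pow_const 2).mul hK_sub
  have pointwise : ∀ u, (∫⁻ v, F v * K (u - v) ∂μ) ^ 2 ≤
      (∫⁻ v, F v ^ 2 * K (u - v) ∂μ) * ∫⁻ v, K v ∂μ := fun u => by
    rw [← lintegral_sub_left_eq_self K u]
    exact sq_lintegral_mul_le_lintegral_sq_mul_mul_lintegral hF
      (hK.comp_quasiMeasurePreserving (quasiMeasurePreserving_sub_left_of_right_invariant μ u))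
  have tonelli : ∫⁻ u, ∫⁻ v, F v ^ 2 * K (u - v) ∂μ ∂μ = (∫⁻ v, F v ^ 2 ∂μ) * ∫⁻ v, K v ∂μ := by
    rw [lintegral_lintegral_swap hFK, ← lintegral_mul_const'' _ (hF.pow_const 2)]
    refine lintegral_congr fun v => ?_
    rw [lintegral_const_mul'' (f := fun u => K (u - v)) _ (hK.comp_quasiMeasurePreserving
      (measurePreserving_sub_right μ v).quasiMeasurePreserving), lintegral_sub_right_eq_self]
  rw [← ENNReal.pow_le_pow_left_iff two_ne_zero, mul_pow, eLpNorm_two_sq_eq_lintegral, eLpNorm_two_sq_eq_lintegral]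
  simp only [enorm_eq_self]
  calc ∫⁻ u, (∫⁻ v, F v * K (u - v) ∂μ) ^ 2 ∂μ
      ≤ ∫⁻ u, (∫⁻ v, F v ^ 2 * K (u - v) ∂μ) * ∫⁻ v, K v ∂μ ∂μ := lintegral_mono pointwise
    _ = (∫⁻ v, F v ^ 2 ∂μ) * (∫⁻ v, K v ∂μ) ^ 2 := by
        rw [lintegral_mul_const'' _ hFK.lintegral_prod_right', tonelli, mul_assoc, sq]

theorem eLpNorm_integral_mul_sub_le [μ.IsNegInvariant] {x ψ : G → 𝕜}
    (hx : AEStronglyMeasurable x μ) (hψ : AEStronglyMeasurable ψ μ) :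
    eLpNorm (fun v => ∫ w, x w * ψ (v - w) ∂μ) 2 μ ≤ eLpNorm x 2 μ * ∫⁻ w, ‖ψ w‖ₑ ∂μ :=
  calc eLpNorm (fun v => ∫ w, x w * ψ (v - w) ∂μ) 2 μ
      ≤ eLpNorm (fun v => ∫⁻ w, ‖x w‖ₑ * ‖ψ (v - w)‖ₑ ∂μ) 2 μ :=
        eLpNorm_mono_enorm fun v => by
          rw [enorm_eq_self]
          refine (enorm_integral_le_lintegral_enorm _).trans_eq ?_
          simp only [enorm_mul]
    _ ≤ eLpNorm (fun w => ‖x w‖ₑ) 2 μ * ∫⁻ w, ‖ψ w‖ₑ ∂μ :=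
        eLpNorm_lintegral_mul_sub_le (F := fun w => ‖x w‖ₑ) (K := fun w => ‖ψ w‖ₑ)
          hx.enorm hψ.enorm
    _ = eLpNorm x 2 μ * ∫⁻ w, ‖ψ w‖ₑ ∂μ := by rw [eLpNorm_enorm]

end Convolution

section Translation

variable {E F : Type*} [NormedAddCommGroup E] [NormedSpace ℝ E] [NormedAddCommGroup F]
  [NormedSpace ℝ F] [CompleteSpace F] {φ : E → F}

theorem enorm_sub_le_setLIntegral_fderiv (hφ : ContDiff ℝ 1 φ) (s a : E) :
    ‖φ (s - a) - φ s‖ₑ ≤ ∫⁻ t in Set.Ioc (0 : ℝ) 1, ‖fderiv ℝ φ (s - t • a)‖ₑ * ‖a‖ₑ := by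
  have hderiv : ∀ t : ℝ,
      HasDerivAt (fun t : ℝ => φ (s - t • a)) (fderiv ℝ φ (s - t • a) (-a)) t := fun t => by
    simpa [Function.comp_def] using (hφ.differentiable one_ne_zero _).hasFDerivAt.comp_hasDerivAt t
      (((hasDerivAt_id t).smul_const a).const_sub s)
  have hcont : Continuous fun t : ℝ => fderiv ℝ φ (s - t • a) (-a) :=
    ((hφ.continuous_fderiv one_ne_zero).comp (by fun_prop)).clm_apply continuous_const
  have ftc : φ (s - a) - φ s = ∫ t in Set.Ioc (0 : ℝ) 1, fderiv ℝ φ (s - t • a) (-a) := by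
    rw [← intervalIntegral.integral_of_le zero_le_one,
      intervalIntegral.integral_eq_sub_of_hasDerivAt (fun t _ => hderiv t)
        (hcont.intervalIntegrable 0 1)]
    simp
  rw [ftc]
  refine (enorm_integral_le_lintegral_enorm _).trans (lintegral_mono fun t => ?_)
  simpa using (fderiv ℝ φ (s - t • a)).le_opENorm (-a)

variable [MeasurableSpace E] [BorelSpace E] {μ : Measure E} [SFinite μ] [μ.IsAddRightInvariant]

theorem lintegral_enorm_comp_sub_sub_le (hφ : ContDiff ℝ 1 φ) (a : E) :
    ∫⁻ s, ‖φ (s - a) - φ s‖ₑ ∂μ ≤ ‖a‖ₑ * ∫⁻ s, ‖fderiv ℝ φ s‖ₑ ∂μ := by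
  have hmeas : Measurable fun p : E × ℝ => ‖fderiv ℝ φ (p.1 - p.2 • a)‖ₑ * ‖a‖ₑ :=
    ((hφ.continuous_fderiv one_ne_zero).comp (by fun_prop)).enorm.measurable.mul_const _
  calc ∫⁻ s, ‖φ (s - a) - φ s‖ₑ ∂μ
      ≤ ∫⁻ s, (∫⁻ t in Set.Ioc (0 : ℝ) 1, ‖fderiv ℝ φ (s - t • a)‖ₑ * ‖a‖ₑ) ∂μ :=
        lintegral_mono fun s => enorm_sub_le_setLIntegral_fderiv hφ s a
    _ = ∫⁻ t in Set.Ioc (0 : ℝ) 1, ∫⁻ s, ‖fderiv ℝ φ (s - t • a)‖ₑ * ‖a‖ₑ ∂μ :=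
        lintegral_lintegral_swap hmeas.aemeasurable
    _ = ∫⁻ t in Set.Ioc (0 : ℝ) 1, ‖a‖ₑ * ∫⁻ s, ‖fderiv ℝ φ s‖ₑ ∂μ := by
        refine lintegral_congr fun t => ?_
        rw [lintegral_mul_const' _ _ enorm_ne_top,
          lintegral_sub_right_eq_self (fun s => ‖fderiv ℝ φ s‖ₑ), mul_comm]
    _ = ‖a‖ₑ * ∫⁻ s, ‖fderiv ℝ φ s‖ₑ ∂μ := by simp

end Translation

section Dilation

open Module

variable {E F : Type*} [NormedAddCommGroup E] [NormedSpace ℝ E] [MeasurableSpace E] [BorelSpace E]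
  [FiniteDimensional ℝ E] [NormedAddCommGroup F] [NormedSpace ℝ F] [CompleteSpace F]
  {μ : Measure E} [μ.IsAddHaarMeasure]

theorem lintegral_comp_smul (g : E → ℝ≥0∞) {r : ℝ} (hr : r ≠ 0) :
    ∫⁻ t, g (r • t) ∂μ = ENNReal.ofReal |(r ^ finrank ℝ E)⁻¹| * ∫⁻ t, g t ∂μ := by
  rw [← smul_eq_mul, ← lintegral_smul_measure, ← Measure.map_addHaar_smul μ hr]
  exact (lintegral_map_equiv g (MeasurableEquiv.smul₀ r hr)).symm

theorem lintegral_enorm_dilation_comp_sub_sub_le {φ : E → F} (hφ : ContDiff ℝ 1 φ) {r : ℝ}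
    (hr : 0 < r) (c : E) :
    ∫⁻ t, ‖r ^ finrank ℝ E • φ (r • (t - c)) - r ^ finrank ℝ E • φ (r • t)‖ₑ ∂μ ≤
      ‖r • c‖ₑ * ∫⁻ s, ‖fderiv ℝ φ s‖ₑ ∂μ := by
  have hrd : 0 < r ^ finrank ℝ E := pow_pos hr _
  have factor : ∀ t, ‖r ^ finrank ℝ E • φ (r • (t - c)) - r ^ finrank ℝ E • φ (r • t)‖ₑ =
      ENNReal.ofReal (r ^ finrank ℝ E) * ‖φ (r • t - r • c) - φ (r • t)‖ₑ := fun t => by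
    rw [← smul_sub, enorm_smul, smul_sub, Real.enorm_eq_ofReal hrd.le]
  simp_rw [factor]
  rw [lintegral_const_mul' _ _ ofReal_ne_top,
    lintegral_comp_smul (fun s => ‖φ (s - r • c) - φ s‖ₑ) hr.ne', ← mul_assoc,
    ← ofReal_mul hrd.le, abs_of_pos (inv_pos.2 hrd), mul_inv_cancel₀ hrd.ne', ofReal_one, one_mul]
  exact lintegral_enorm_comp_sub_sub_le hφ (r • c)

theorem lintegral_enorm_zpow_dilation_comp_sub_sub_le {n : ℕ} (J : ℤ)
    {φ : EuclideanSpace ℝ (Fin n) → ℝ} (hφ : ContDiff ℝ 1 φ) (hsupp : HasCompactSupport φ)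
    (c : EuclideanSpace ℝ (Fin n)) :
    ∫⁻ t, ‖(2 : ℝ) ^ (-(n : ℤ) * J) * φ ((2 : ℝ) ^ (-J) • (t - c)) -
        (2 : ℝ) ^ (-(n : ℤ) * J) * φ ((2 : ℝ) ^ (-J) • t)‖ₑ ≤
      ENNReal.ofReal ((2 : ℝ) ^ (-J) * ‖c‖ * ∫ u, ‖fderiv ℝ φ u‖) := by
  have hr : 0 < (2 : ℝ) ^ (-J) := by positivity
  have hscale : (2 : ℝ) ^ (-(n : ℤ) * J) =
      ((2 : ℝ) ^ (-J)) ^ finrank ℝ (EuclideanSpace ℝ (Fin n)) := by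
    rw [finrank_euclideanSpace_fin, ← zpow_natCast, ← zpow_mul]
    ring_nf
  have hDφ : Integrable (fderiv ℝ φ) :=
    (hφ.continuous_fderiv one_ne_zero).integrable_of_hasCompactSupport (hsupp.fderiv (𝕜 := ℝ))
  have := lintegral_enorm_dilation_comp_sub_sub_le (μ := volume) hφ hr c
  rwa [← hscale, ← ofReal_integral_norm_eq_lintegral_enorm hDφ, enorm_smul,
    Real.enorm_eq_ofReal hr.le, ← ofReal_norm, ← ofReal_mul hr.le,
    ← ofReal_mul (by positivity)] at this

end Dilation

/-- Local translation invariance of first-order scattering coefficients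
`ρ(x ⋆ ψ) ⋆ φ_J` (with `ρ` the pointwise modulus and
`φ_J(u) = 2^{−nJ} φ(2^{−J} u)`):
`‖ |(T_c x) ⋆ ψ| ⋆ φ_J − |x ⋆ ψ| ⋆ φ_J ‖_{L²}
  ≤ 2^{−J} ‖c‖ ‖∇φ‖_{L¹} ‖ψ‖_{L¹} ‖x‖_{L²}`. -/
theorem scattering_translation_stability
    {n : ℕ} (J : ℤ) (ψ : EuclideanSpace ℝ (Fin n) → ℂ) (hψ : Integrable ψ)
    (φ : EuclideanSpace ℝ (Fin n) → ℝ)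
    (hφ : ContDiff ℝ 1 φ) (hsupp : HasCompactSupport φ)
    (x : EuclideanSpace ℝ (Fin n) → ℂ) (hx : MemLp x 2 volume)
    (c : EuclideanSpace ℝ (Fin n)) :
    eLpNorm
      (fun u =>
        (∫ v, ‖∫ w, x (w - c) * ψ (v - w)‖ *
            ((2 : ℝ) ^ (-(n : ℤ) * J) * φ ((2 : ℝ) ^ (-J) • (u - v)))) -
        ∫ v, ‖∫ w, x w * ψ (v - w)‖ *
            ((2 : ℝ) ^ (-(n : ℤ) * J) * φ ((2 : ℝ) ^ (-J) • (u - v)))) 2 volume ≤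
    ENNReal.ofReal ((2 : ℝ) ^ (-J) * ‖c‖ * (∫ u, ‖fderiv ℝ φ u‖) * ∫ u, ‖ψ u‖) *
      eLpNorm x 2 volume := by
  set κ : EuclideanSpace ℝ (Fin n) → ℝ :=
    fun t => (2 : ℝ) ^ (-(n : ℤ) * J) * φ ((2 : ℝ) ^ (-J) • t)
  set conv : EuclideanSpace ℝ (Fin n) → ℂ := fun v => ∫ w, x w * ψ (v - w)
  have hconv : AEStronglyMeasurable conv := aestronglyMeasurable_integral_mul_sub hx.1 hψ.1
  have hshift : ∀ v, ∫ w, x (w - c) * ψ (v - w) = conv (v - c) := fun v =>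
    integral_comp_sub_mul_sub x ψ c v
  have hκ_cont : Continuous κ := by fun_prop
  calc _ ≤ eLpNorm (fun u => ∫⁻ v, ‖‖conv v‖‖ₑ * ‖κ (u - v - c) - κ (u - v)‖ₑ) 2 volume :=
        eLpNorm_mono_enorm fun u => by
          simp only [hshift, enorm_eq_self]
          exact enorm_integral_comp_sub_mul_sub_integral_mul_sub_le hconv.norm
            hκ_cont.aestronglyMeasurable c u
    _ ≤ eLpNorm (fun v => ‖‖conv v‖‖ₑ) 2 volume * ∫⁻ t, ‖κ (t - c) - κ t‖ₑ :=
        eLpNorm_lintegral_mul_sub_le (F := fun v => ‖‖conv v‖‖ₑ)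
          (K := fun t => ‖κ (t - c) - κ t‖ₑ) hconv.norm.enorm (by fun_prop)
    _ ≤ (eLpNorm x 2 volume * ENNReal.ofReal (∫ u, ‖ψ u‖)) *
          ENNReal.ofReal ((2 : ℝ) ^ (-J) * ‖c‖ * ∫ u, ‖fderiv ℝ φ u‖) := by
        rw [eLpNorm_enorm, eLpNorm_norm, ofReal_integral_norm_eq_lintegral_enorm hψ]
        exact mul_le_mul' (eLpNorm_integral_mul_sub_le hx.1 hψ.1)
          (lintegral_enorm_zpow_dilation_comp_sub_sub_le J hφ hsupp c)
    _ = _ := by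
        rw [ofReal_mul (by positivity : (0 : ℝ) ≤ 2 ^ (-J) * ‖c‖ * ∫ u, ‖fderiv ℝ φ u‖)]
        ring
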